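/- arXiv:2012.07323 — 2 statements merged into one kernel-verified Lean document; each statement's English description precedes it below -/
import Mathlib

section
/- Let 𝔫 ∈ A be a nonconstant polynomial and 𝔪 ∈ A a monic irreducible polynomial not dividing 𝔫. Let 𝔞 ∈ A be coprime to 𝔫 and let η ∈ SL₂(A) satisfy η₂₁ ≡ 0 (mod 𝔫), η₂₂ ≡ 𝔞 (mod 𝔫), and η ≡ [[1,0],[0,1]] (mod 𝔪). Put D = [[1,0],[0,𝔪]] ∈ M₂(A). Then there exists γ ∈ Γ₁(𝔫) with η⁻¹Dη = γD, and consequently Γ₁(𝔫)·(η⁻¹Dη)·Γ₁(𝔫) = Γ₁(𝔫)·D·Γ₁(𝔫) as subsets of the 2×2 matrices over A. -/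
open Polynomial Matrix

def Gamma1 (F : Type*) [Field F] (n : Polynomial F) :
    Set (Matrix (Fin 2) (Fin 2) (Polynomial F)) :=
  {γ | γ.det = 1 ∧ n ∣ γ 1 0 ∧ n ∣ (γ 0 0 - 1) ∧ n ∣ (γ 1 1 - 1)}

lemma Gamma1.mul {F : Type*} [Field F] {n : Polynomial F}
    {g h : Matrix (Fin 2) (Fin 2) (Polynomial F)}
    (hg : g ∈ Gamma1 F n) (hh : h ∈ Gamma1 F n) : g * h ∈ Gamma1 F n := by
  obtain ⟨hgd, hg1, hg2, hg3⟩ := hg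
  obtain ⟨hhd, hh1, hh2, hh3⟩ := hh
  refine ⟨by rw [Matrix.det_mul, hgd, hhd, one_mul], ?_, ?_, ?_⟩
  · have : (g * h) 1 0 = g 1 0 * h 0 0 + g 1 1 * h 1 0 := by
      simp [Matrix.mul_apply, Fin.sum_univ_two]
    rw [this]
    exact dvd_add (hg1.mul_right _) (hh1.mul_left _)
  · have : (g * h) 0 0 - 1 = (g 0 0 - 1) * h 0 0 + (h 0 0 - 1) + g 0 1 * h 1 0 := by
      simp [Matrix.mul_apply, Fin.sum_univ_two]; ring
    rw [this]
    exact dvd_add (dvd_add (hg2.mul_right _) hh2) (hh1.mul_left _)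
  · have : (g * h) 1 1 - 1 = (g 1 1 - 1) * h 1 1 + (h 1 1 - 1) + g 1 0 * h 0 1 := by
      simp [Matrix.mul_apply, Fin.sum_univ_two]; ring
    rw [this]
    exact dvd_add (dvd_add (hg3.mul_right _) hh3) (hg1.mul_right _)

lemma Gamma1.inv {F : Type*} [Field F] {n : Polynomial F}
    {g : Matrix (Fin 2) (Fin 2) (Polynomial F)}
    (hg : g ∈ Gamma1 F n) : g⁻¹ ∈ Gamma1 F n := by
  obtain ⟨hgd, hg1, hg2, hg3⟩ := hg
  have hinv : g⁻¹ = !![g 1 1, -g 0 1; -g 1 0, g 0 0] := by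
    rw [Matrix.inv_def, hgd, Matrix.adjugate_fin_two]
    simp
  rw [hinv]
  refine ⟨?_, ?_, ?_, ?_⟩
  · rw [Matrix.det_fin_two_of]
    have := Matrix.det_fin_two g
    rw [hgd] at this
    linear_combination -this
  · simpa using hg1.neg_right
  · simpa using hg3
  · simpa using hg2

theorem stmt1 (p : ℕ) (hp : p.Prime) (F : Type*) [Field F] [Fintype F] [CharP F p]
    (𝔫 𝔪 𝔞 : Polynomial F) (h𝔫 : 1 ≤ 𝔫.natDegree)
    (h𝔪mon : 𝔪.Monic) (h𝔪irr : Irreducible 𝔪) (h𝔪ndvd : ¬ 𝔪 ∣ 𝔫)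
    (h𝔞 : IsCoprime 𝔞 𝔫)
    (η : Matrix (Fin 2) (Fin 2) (Polynomial F)) (hη : η.det = 1)
    (hη21 : 𝔫 ∣ η 1 0) (hη22 : 𝔫 ∣ (η 1 1 - 𝔞))
    (hηid : ∀ i j, 𝔪 ∣ (η i j - (1 : Matrix (Fin 2) (Fin 2) (Polynomial F)) i j)) :
    (∃ γ ∈ Gamma1 F 𝔫, η⁻¹ * !![1, 0; 0, 𝔪] * η = γ * !![1, 0; 0, 𝔪]) ∧
    {y | ∃ g₁ ∈ Gamma1 F 𝔫, ∃ g₂ ∈ Gamma1 F 𝔫,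
        y = g₁ * (η⁻¹ * !![1, 0; 0, 𝔪] * η) * g₂} =
    {y | ∃ g₁ ∈ Gamma1 F 𝔫, ∃ g₂ ∈ Gamma1 F 𝔫,
        y = g₁ * !![1, 0; 0, 𝔪] * g₂} := by
  set a := η 0 0 with ha
  set b := η 0 1 with hbdef
  set c := η 1 0 with hcdef
  set d := η 1 1 with hd
  have hb' : 𝔪 ∣ b := by
    have := hηid 0 1
    simpa using this
  obtain ⟨b', hb⟩ := hb'
  have hdet : a * d - 𝔪 * b' * c = 1 := by
    have := Matrix.det_fin_two η
    rw [hη] at this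
    rw [← ha, ← hbdef, ← hcdef, ← hd, hb] at this
    linear_combination -this
  set D : Matrix (Fin 2) (Fin 2) (Polynomial F) := !![1, 0; 0, 𝔪] with hD
  set G : Matrix (Fin 2) (Fin 2) (Polynomial F) :=
    !![a * d - 𝔪 * (𝔪 * b') * c, b' * d * (1 - 𝔪);
       a * c * (𝔪 - 1), a * d - b' * c] with hG
  obtain ⟨k, hk⟩ := hη21

  have hGmem : G ∈ Gamma1 F 𝔫 := by
    refine ⟨?_, ?_, ?_, ?_⟩
    · rw [hG, Matrix.det_fin_two_of]
      linear_combination (a * d - 𝔪 * b' * c + 1) * hdet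
    · rw [hG]
      exact ⟨a * k * (𝔪 - 1), by rw [show Matrix.of _ = !![a * d - 𝔪 * (𝔪 * b') * c, b' * d * (1 - 𝔪); a * c * (𝔪 - 1), a * d - b' * c] from rfl]; simp; linear_combination (𝔪 - 1) * a * hk⟩
    · rw [hG]
      refine ⟨𝔪 * b' * k - 𝔪 * 𝔪 * b' * k, ?_⟩
      simp
      linear_combination hdet + (𝔪 * b' - 𝔪 * 𝔪 * b') * hk
    · rw [hG]
      refine ⟨𝔪 * b' * k - b' * k, ?_⟩
      simp
      linear_combination hdet + (𝔪 * b' - b') * hk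
  have hu : IsUnit η.det := by rw [hη]; exact isUnit_one
  have hkey : η * (G * D) = D * η := by
    have hη' : η = !![a, b; c, d] := by
      rw [ha, hbdef, hcdef, hd]; exact Matrix.eta_fin_two η
    rw [hη', hG, hD, hb]
    refine Matrix.ext fun i j => ?_
    fin_cases i <;> fin_cases j <;>
      simp [Matrix.mul_apply, Fin.sum_univ_two]
    · linear_combination a * hdet
    · linear_combination 𝔪 * b' * hdet
    · linear_combination 𝔪 * c * hdet
    · linear_combination 𝔪 * d * hdet
  have hmain : η⁻¹ * D * η = G * D := by
    calc η⁻¹ * D * η = η⁻¹ * (D * η) := by rw [mul_assoc]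
    _ = η⁻¹ * (η * (G * D)) := by rw [hkey]
    _ = (η⁻¹ * η) * (G * D) := by rw [mul_assoc]
    _ = G * D := by rw [Matrix.nonsing_inv_mul η hu, one_mul]
  constructor
  · exact ⟨G, hGmem, hmain⟩
  · ext y
    simp only [Set.mem_setOf_eq]
    constructor
    · rintro ⟨g₁, hg₁, g₂, hg₂, rfl⟩
      refine ⟨g₁ * G, Gamma1.mul hg₁ hGmem, g₂, hg₂, ?_⟩
      rw [hmain]
      noncomm_ring
    · rintro ⟨g₁, hg₁, g₂, hg₂, rfl⟩
      refine ⟨g₁ * G⁻¹, Gamma1.mul hg₁ (Gamma1.inv hGmem), g₂, hg₂, ?_⟩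
      rw [hmain]
      have hGu : IsUnit G.det := by rw [hGmem.1]; exact isUnit_one
      have : G⁻¹ * (G * D) = D := by
        rw [← mul_assoc, Matrix.nonsing_inv_mul G hGu, one_mul]
      calc g₁ * D * g₂ = g₁ * (G⁻¹ * (G * D)) * g₂ := by rw [this]
      _ = g₁ * G⁻¹ * (G * D) * g₂ := by noncomm_ring
end

section
/- Fix an integer n ≥ 1. (i) Let c, d, c′, d′ ∈ A have degree < n−1 and let h, h′ be standard lifts for (c,d), (c′,d′) of level tⁿ. Then there exist γ ∈ Γ₁(tⁿ) and λ ∈ K^× with γ·h·(1,0)ᵀ = λ·h′·(1,0)ᵀ if and only if c = c′ and d′ − d ≡ c·e (mod t^{n−1}) for some e ∈ A. (ii) Every nonzero vector v ∈ K² for which there exist δ ∈ Γ₁(t) and μ ∈ K^× with δv = μ·(1,0)ᵀ satisfies: there exist c, d ∈ A of degree < n−1, a standard lift h for (c,d), γ ∈ Γ₁(tⁿ) and λ ∈ K^× with γv = λ·h·(1,0)ᵀ. Thus the cusps h_{(c,d)}(∞), taken over representatives of the relation (c,d) ∼ (c′,d′) ⇔ c = c′ and d′−d ∈ c·(A/(t^{n−1})),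 form a complete set of representatives of the cusps of Γ₁(tⁿ) lying over ∞. -/
/-!
Two elements of `SL₂(A)` send `∞` to the same cusp exactly when their first columns differ by a
unit of `A`, i.e. by a nonzero constant. On `Γ₁(t)` the first column is `≡ (1, 0) (mod t)`, which
forces that constant to be `1`. Hence (i) is a congruence computation modulo `tⁿ` on the equation
`γ h e₁ = h' e₁`: its second row gives `tc ≡ tc'`, and its first row multiplied by `(1+td)(1+td')`
gives `t(d' - d) ≡ -t c γ₁₂ (1+td)(1+td')`; conversely `h' [[1,-e],[0,1]] h⁻¹ ∈ Γ₁(tⁿ)`.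
For (ii), `v` is a multiple of `δ⁻¹ e₁`; multiplying `δ⁻¹ ∈ Γ₁(t)` on the right by a unipotent
matrix makes it lower triangular modulo `tⁿ`, and such an element of `Γ₁(t)` is a standard lift
for `(c, d)` reduced modulo `t^{n-1}`.
-/

open Polynomial Matrix

/-- A standard lift `h = h_{(c,d)}` of level `tⁿ`: an element of `SL₂(A)` with
`h₁₂ ≡ 0`, `h₂₁ ≡ tc`, `h₂₂ ≡ 1 + td` and `h₁₁(1+td) ≡ 1 (mod tⁿ)`. -/
def IsStdLift (F : Type*) [Field F] (n : ℕ) (c d : Polynomial F)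
    (h : Matrix (Fin 2) (Fin 2) (Polynomial F)) : Prop :=
  h.det = 1 ∧ (X : Polynomial F) ^ n ∣ h 0 1 ∧
    (X : Polynomial F) ^ n ∣ (h 1 0 - X * c) ∧
    (X : Polynomial F) ^ n ∣ (h 1 1 - (1 + X * d)) ∧
    (X : Polynomial F) ^ n ∣ (h 0 0 * (1 + X * d) - 1)

local notation:max "π" N:max => Ideal.Quotient.mk (Ideal.span {N})

section General

variable {R S : Type*} [CommRing R] [CommRing S]

theorem Ideal.Quotient.mk_span_singleton_eq_mk_iff {a x y : R} :
    Ideal.Quotient.mk (Ideal.span {a}) x = Ideal.Quotient.mk (Ideal.span {a}) y ↔ a ∣ x - y := by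
  rw [Ideal.Quotient.eq, Ideal.mem_span_singleton]

theorem Matrix.map_mulVec_one_zero (f : R →+* S) (M : Matrix (Fin 2) (Fin 2) R) :
    M.map f *ᵥ ![1, 0] = fun i => f (M i 0) := by
  ext i
  simp [mulVec, dotProduct, Fin.sum_univ_two]

theorem Matrix.isCoprime_of_det_eq_one {M : Matrix (Fin 2) (Fin 2) R} (hM : M.det = 1) :
    IsCoprime (M 0 0) (M 1 0) :=
  ⟨M 1 1, -M 0 1, by rw [det_fin_two] at hM; linear_combination hM⟩

theorem exists_unit_col_eq_of_map_mulVec_eq_smul {f : R →+* S} (hf : Function.Injective f)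
    {M N : Matrix (Fin 2) (Fin 2) R} (hM : M.det = 1) (hN : N.det = 1) {l : S}
    (h : M.map f *ᵥ ![1, 0] = l • (N.map f *ᵥ ![1, 0])) :
    ∃ u : Rˣ, ∀ i, M i 0 = u * N i 0 := by
  simp only [map_mulVec_one_zero, funext_iff, Pi.smul_apply, smul_eq_mul] at h
  obtain ⟨a, b, hab⟩ := isCoprime_of_det_eq_one hN
  obtain ⟨a', b', hab'⟩ := isCoprime_of_det_eq_one hM
  -- `(a, b)` is a left inverse of the first column of `N`, so it recovers `l` inside `R`
  set L := a * M 0 0 + b * M 1 0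
  have hL : f L = l := by
    have hab_f := congrArg f hab
    simp only [map_add, map_mul, map_one] at hab_f
    simp only [L, map_add, map_mul, h]
    linear_combination l * hab_f
  have hcol : ∀ i, M i 0 = L * N i 0 := fun i => hf (by rw [map_mul, hL, h])
  have hunit : IsUnit L := IsUnit.of_mul_eq_one (a' * N 0 0 + b' * N 1 0) (by
    rw [← hab', hcol 0, hcol 1]; ring)
  exact ⟨hunit.unit, hcol⟩

theorem eq_smul_map_adjugate_mulVec (f : R →+* S)
    {δ : Matrix (Fin 2) (Fin 2) R} (hδ : δ.det = 1) {v : Fin 2 → S} {m : S}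
    (hv : δ.map f *ᵥ v = ![m, 0]) : v = m • ((adjugate δ).map f *ᵥ ![1, 0]) := by
  calc v = (adjugate δ * δ).map f *ᵥ v := by
          rw [adjugate_mul, hδ, one_smul, Matrix.map_one f (map_zero f) (map_one f), one_mulVec]
    _ = (adjugate δ).map f *ᵥ (m • ![1, 0]) := by
          rw [Matrix.map_mul, ← mulVec_mulVec, hv, smul_vec2, smul_eq_mul, mul_one, smul_zero]
    _ = m • ((adjugate δ).map f *ᵥ ![1, 0]) := mulVec_smul _ m _

end General

section Cusps

variable {F : Type*} [Field F]

theorem Polynomial.eq_one_of_isUnit_of_X_dvd_sub_one {u : F[X]} (hu : IsUnit u)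
    (h : X ∣ u - 1) : u = 1 := by
  obtain ⟨r, -, rfl⟩ := Polynomial.isUnit_iff.1 hu
  rw [X_dvd_iff, coeff_sub, coeff_C_zero, coeff_one_zero, sub_eq_zero] at h
  rw [h, C_1]

theorem Polynomial.X_pow_dvd_X_mul_iff {n : ℕ} (hn : 1 ≤ n) {a : F[X]} :
    X ^ n ∣ X * a ↔ X ^ (n - 1) ∣ a := by
  rw [← Nat.sub_add_cancel hn, pow_succ', Nat.add_sub_cancel,
    mul_dvd_mul_iff_left X_ne_zero]

theorem Polynomial.X_pow_dvd_X_mul_of_dvd {n : ℕ} {a : F[X]} (h : X ^ (n - 1) ∣ a) :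
    X ^ n ∣ X * a :=
  (pow_dvd_pow X (by omega : n ≤ n - 1 + 1)).trans (by rw [pow_succ']; exact mul_dvd_mul_left X h)

theorem Polynomial.eq_of_X_pow_dvd_sub {k : ℕ} {p q : F[X]} (h : X ^ k ∣ p - q)
    (hp : p.degree < k) (hq : q.degree < k) : p = q := by
  refine sub_eq_zero.1 (eq_zero_of_dvd_of_degree_lt h ?_)
  rw [degree_X_pow]
  exact (degree_sub_le p q).trans_lt (max_lt hp hq)

theorem mem_Gamma1_iff {N : F[X]} {γ : Matrix (Fin 2) (Fin 2) F[X]} :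
    γ ∈ Gamma1 F N ↔ γ.det = 1 ∧ π N (γ 1 0) = 0 ∧ π N (γ 0 0) = 1 ∧ π N (γ 1 1) = 1 := by
  simp only [← map_one (π N), ← map_zero (π N), Ideal.Quotient.mk_span_singleton_eq_mk_iff,
    sub_zero, Gamma1, Set.mem_ofPred_eq]

theorem one_mem_Gamma1 (N : F[X]) : 1 ∈ Gamma1 F N := by
  simp [Gamma1]

theorem mul_mem_Gamma1 {N : F[X]} {γ δ : Matrix (Fin 2) (Fin 2) F[X]} (hγ : γ ∈ Gamma1 F N)
    (hδ : δ ∈ Gamma1 F N) : γ * δ ∈ Gamma1 F N := by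
  rw [mem_Gamma1_iff] at *
  obtain ⟨hγdet, hγ10, hγ00, hγ11⟩ := hγ
  obtain ⟨hδdet, hδ10, hδ00, hδ11⟩ := hδ
  simp only [det_mul, hγdet, hδdet, mul_apply, Fin.sum_univ_two, map_add, map_mul, hγ10, hγ00,
    hγ11, hδ10, hδ00, hδ11]
  simp

theorem adjugate_mem_Gamma1 {N : F[X]} {δ : Matrix (Fin 2) (Fin 2) F[X]} (hδ : δ ∈ Gamma1 F N) :
    adjugate δ ∈ Gamma1 F N := by
  obtain ⟨hdet, h10, h00, h11⟩ := mem_Gamma1_iff.1 hδ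
  exact mem_Gamma1_iff.2 ⟨by simp [det_adjugate, hdet], by simp [adjugate_fin_two, h10],
    by simpa [adjugate_fin_two] using h11, by simpa [adjugate_fin_two] using h00⟩

theorem unipotent_mem_Gamma1 (N b : F[X]) : !![1, b; 0, 1] ∈ Gamma1 F N := by
  simp [Gamma1]

theorem Gamma1_subset_of_dvd {M N : F[X]} (h : N ∣ M) : Gamma1 F M ⊆ Gamma1 F N :=
  fun _ ⟨hdet, h10, h00, h11⟩ => ⟨hdet, h.trans h10, h.trans h00, h.trans h11⟩

theorem isStdLift_iff {n : ℕ} {c d : F[X]} {h : Matrix (Fin 2) (Fin 2) F[X]} :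
    IsStdLift F n c d h ↔ h.det = 1 ∧ π (X ^ n) (h 0 1) = 0 ∧
      π (X ^ n) (h 1 0) = π (X ^ n) X * π (X ^ n) c ∧
      π (X ^ n) (h 1 1) = 1 + π (X ^ n) X * π (X ^ n) d ∧
      π (X ^ n) (h 0 0) * (1 + π (X ^ n) X * π (X ^ n) d) = 1 := by
  simp only [← map_one (π (X ^ n)), ← map_zero (π (X ^ n)), ← map_mul, ← map_add,
    Ideal.Quotient.mk_span_singleton_eq_mk_iff, sub_zero, IsStdLift]

theorem IsStdLift.mem_Gamma1_X {n : ℕ} (hn : 1 ≤ n) {c d : F[X]}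
    {h : Matrix (Fin 2) (Fin 2) F[X]} (hh : IsStdLift F n c d h) : h ∈ Gamma1 F X := by
  have hX : (X : F[X]) ∣ X ^ n := dvd_pow_self X (by omega)
  obtain ⟨hdet, -, h10, h11, h00⟩ := hh
  have h10' := Ideal.Quotient.mk_span_singleton_eq_mk_iff.2 (hX.trans h10)
  have h11' := Ideal.Quotient.mk_span_singleton_eq_mk_iff.2 (hX.trans h11)
  have h00' := Ideal.Quotient.mk_span_singleton_eq_mk_iff.2 (hX.trans h00)
  have hXX : π X (X : F[X]) = 0 := (Ideal.Quotient.eq_zero_iff_dvd _ _).2 dvd_rfl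
  simp only [map_mul, map_add, map_one, hXX, zero_mul, add_zero, mul_one] at h10' h11' h00'
  exact mem_Gamma1_iff.2 ⟨hdet, h10', h00', h11'⟩

theorem col_eq_of_map_mulVec_eq_smul {S : Type*} [CommRing S] {f : F[X] →+* S}
    (hf : Function.Injective f) {M N : Matrix (Fin 2) (Fin 2) F[X]} (hM : M ∈ Gamma1 F X)
    (hN : N ∈ Gamma1 F X) {l : S} (h : M.map f *ᵥ ![1, 0] = l • (N.map f *ᵥ ![1, 0])) :
    ∀ i, M i 0 = N i 0 := by
  obtain ⟨u, hu⟩ := exists_unit_col_eq_of_map_mulVec_eq_smul hf hM.1 hN.1 h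
  suffices (u : F[X]) = 1 by simpa [this] using hu
  refine eq_one_of_isUnit_of_X_dvd_sub_one u.isUnit ?_
  obtain ⟨-, -, hM00, -⟩ := mem_Gamma1_iff.1 hM
  obtain ⟨-, -, hN00, -⟩ := mem_Gamma1_iff.1 hN
  have hu0 := congrArg (π X) (hu 0)
  rw [map_mul, hM00, hN00, mul_one] at hu0
  rw [← Ideal.Quotient.mk_span_singleton_eq_mk_iff, ← hu0, map_one]

theorem IsStdLift.eq_and_exists_of_col_eq {n : ℕ} (hn : 1 ≤ n) {c d c' d' : F[X]}
    (hc : c.degree < ↑(n - 1)) (hc' : c'.degree < ↑(n - 1))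
    {γ h h' : Matrix (Fin 2) (Fin 2) F[X]} (hγ : γ ∈ Gamma1 F (X ^ n))
    (hh : IsStdLift F n c d h) (hh' : IsStdLift F n c' d' h')
    (hcol : ∀ i, (γ * h) i 0 = h' i 0) :
    c = c' ∧ ∃ e, X ^ (n - 1) ∣ d' - d - c * e := by
  obtain ⟨-, hγ10, hγ00, hγ11⟩ := mem_Gamma1_iff.1 hγ
  obtain ⟨-, -, h10, -, h00⟩ := isStdLift_iff.1 hh
  obtain ⟨-, -, h10', -, h00'⟩ := isStdLift_iff.1 hh'
  have row0 := congrArg (π (X ^ n)) (hcol 0)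
  have row1 := congrArg (π (X ^ n)) (hcol 1)
  simp only [mul_apply, Fin.sum_univ_two, map_add, map_mul, hγ10, hγ00, hγ11, h10, h10',
    zero_mul, one_mul, zero_add] at row0 row1
  obtain rfl : c = c' := by
    refine eq_of_X_pow_dvd_sub ?_ hc hc'
    rw [← X_pow_dvd_X_mul_iff hn, ← Ideal.Quotient.eq_zero_iff_dvd, map_mul, map_sub]
    linear_combination row1
  refine ⟨rfl, -(γ 0 1 * ((1 + X * d) * (1 + X * d'))), ?_⟩
  rw [← X_pow_dvd_X_mul_iff hn, ← Ideal.Quotient.eq_zero_iff_dvd]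
  simp only [map_mul, map_sub, map_neg, map_add, map_one]
  -- multiplying the first row by `(1 + Xd)(1 + Xd')` clears the inverses `h₁₁`, `h'₁₁`
  linear_combination (1 + π (X ^ n) X * π (X ^ n) d) * (1 + π (X ^ n) X * π (X ^ n) d') * row0
    - (1 + π (X ^ n) X * π (X ^ n) d') * h00 + (1 + π (X ^ n) X * π (X ^ n) d) * h00'

theorem IsStdLift.exists_mem_Gamma1_col_eq {n : ℕ} {c d d' e : F[X]}
    {h h' : Matrix (Fin 2) (Fin 2) F[X]} (hh : IsStdLift F n c d h)
    (hh' : IsStdLift F n c d' h') (he : X ^ (n - 1) ∣ d' - d - c * e) :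
    ∃ γ ∈ Gamma1 F (X ^ n), ∀ i, (γ * h) i 0 = h' i 0 := by
  refine ⟨h' * !![1, -e; 0, 1] * adjugate h, ?_, ?_⟩
  · obtain ⟨hdet, h01, h10, h11, h00⟩ := isStdLift_iff.1 hh
    obtain ⟨hdet', h01', h10', h11', h00'⟩ := isStdLift_iff.1 hh'
    have hx := (Ideal.Quotient.eq_zero_iff_dvd _ _).2 (X_pow_dvd_X_mul_of_dvd he)
    simp only [map_mul, map_sub] at hx
    refine mem_Gamma1_iff.2 ⟨by simp [det_adjugate, hdet, hdet'], ?_, ?_, ?_⟩ <;>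
      simp only [mul_apply, Fin.sum_univ_two, adjugate_fin_two, of_apply, cons_val', cons_val_zero,
        cons_val_one, empty_val', cons_val_fin_one, map_add, map_mul, map_neg, map_zero, map_one,
        h01, h10, h11, h01', h10', h11']
    · linear_combination -(π (X ^ n) X * π (X ^ n) c) * hx
    · linear_combination h00' - π (X ^ n) (h' 0 0) * hx
    · linear_combination h00 + π (X ^ n) (h 0 0) * hx
  · intro i
    rw [Matrix.mul_assoc, adjugate_mul, hh.1, one_smul, Matrix.mul_one]
    simp [mul_apply, Fin.sum_univ_two]

theorem exists_isStdLift_of_mem_Gamma1 {n : ℕ} {h : Matrix (Fin 2) (Fin 2) F[X]}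
    (hh : h ∈ Gamma1 F X) (h01 : X ^ n ∣ h 0 1) :
    ∃ c d : F[X], c.degree < ↑(n - 1) ∧ d.degree < ↑(n - 1) ∧ IsStdLift F n c d h := by
  obtain ⟨hdet, ⟨c₀, hc₀⟩, -, ⟨d₀, hd₀⟩⟩ := hh
  have hdeg (p : F[X]) : (p %ₘ X ^ (n - 1)).degree < ↑(n - 1) := by
    simpa only [degree_X_pow] using degree_modByMonic_lt p (monic_X_pow (n - 1))
  have h10 : X ^ n ∣ h 1 0 - X * (c₀ %ₘ X ^ (n - 1)) := by
    rw [hc₀, ← mul_sub]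
    exact X_pow_dvd_X_mul_of_dvd (dvd_sub_comm.1 (dvd_modByMonic_sub _ _))
  have h11 : X ^ n ∣ h 1 1 - (1 + X * (d₀ %ₘ X ^ (n - 1))) := by
    rw [← sub_sub, hd₀, ← mul_sub]
    exact X_pow_dvd_X_mul_of_dvd (dvd_sub_comm.1 (dvd_modByMonic_sub _ _))
  refine ⟨_, _, hdeg c₀, hdeg d₀, hdet, h01, h10, h11, ?_⟩
  rw [det_fin_two] at hdet
  have key : h 0 0 * (1 + X * (d₀ %ₘ X ^ (n - 1))) - 1 =
      h 0 1 * h 1 0 - h 0 0 * (h 1 1 - (1 + X * (d₀ %ₘ X ^ (n - 1)))) := by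
    linear_combination hdet
  rw [key]
  exact dvd_sub (dvd_mul_of_dvd_left h01 _) (dvd_mul_of_dvd_right h11 _)

theorem exists_mem_Gamma1_col_eq_adjugate {δ : Matrix (Fin 2) (Fin 2) F[X]}
    (hδ : δ ∈ Gamma1 F X) (n : ℕ) :
    ∃ h ∈ Gamma1 F X, X ^ n ∣ h 0 1 ∧ ∀ i, h i 0 = adjugate δ i 0 := by
  obtain ⟨k, hk⟩ := hδ.2.2.2
  obtain ⟨y, a, hya⟩ : IsCoprime (X ^ n) (δ 1 1) :=
    IsCoprime.pow_left ⟨-k, 1, by linear_combination hk⟩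
  -- `a` inverts `δ₂₂` modulo `tⁿ`, so right multiplication by `[[1, a δ₁₂], [0, 1]]` clears `h₁₂`
  refine ⟨adjugate δ * !![1, a * δ 0 1; 0, 1],
    mul_mem_Gamma1 (adjugate_mem_Gamma1 hδ) (unipotent_mem_Gamma1 _ _), ⟨-(δ 0 1 * y), ?_⟩, ?_⟩
  · simp only [mul_apply, Fin.sum_univ_two, adjugate_fin_two, of_apply, cons_val', cons_val_zero,
      cons_val_one, empty_val', cons_val_fin_one]
    linear_combination δ 0 1 * hya
  · intro i
    simp [mul_apply, Fin.sum_univ_two]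

end Cusps

set_option synthInstance.maxHeartbeats 1000000 in
theorem stmt6_general (F : Type*) [Field F]
    (n : ℕ) (hn : 1 ≤ n) :
    (∀ c d c' d' : Polynomial F, ∀ h h' : Matrix (Fin 2) (Fin 2) (Polynomial F),
      c.degree < ((n - 1 : ℕ) : WithBot ℕ) → d.degree < ((n - 1 : ℕ) : WithBot ℕ) →
      c'.degree < ((n - 1 : ℕ) : WithBot ℕ) → d'.degree < ((n - 1 : ℕ) : WithBot ℕ) →
      IsStdLift F n c d h → IsStdLift F n c' d' h' →
      ((∃ γ ∈ Gamma1 F ((X : Polynomial F) ^ n), ∃ l : RatFunc F, l ≠ 0 ∧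
          (γ.map (algebraMap (Polynomial F) (RatFunc F))).mulVec
            ((h.map (algebraMap (Polynomial F) (RatFunc F))).mulVec
              (![1, 0] : Fin 2 → RatFunc F)) =
          l • ((h'.map (algebraMap (Polynomial F) (RatFunc F))).mulVec
              (![1, 0] : Fin 2 → RatFunc F))) ↔
        (c = c' ∧ ∃ e : Polynomial F, (X : Polynomial F) ^ (n - 1) ∣ (d' - d - c * e)))) ∧
    (∀ v : Fin 2 → RatFunc F, v ≠ 0 →
      (∃ δ ∈ Gamma1 F (X : Polynomial F), ∃ m : RatFunc F, m ≠ 0 ∧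
        (δ.map (algebraMap (Polynomial F) (RatFunc F))).mulVec v = ![m, 0]) →
      ∃ c d : Polynomial F, c.degree < ((n - 1 : ℕ) : WithBot ℕ) ∧
        d.degree < ((n - 1 : ℕ) : WithBot ℕ) ∧
        ∃ h : Matrix (Fin 2) (Fin 2) (Polynomial F), IsStdLift F n c d h ∧
          ∃ γ ∈ Gamma1 F ((X : Polynomial F) ^ n), ∃ l : RatFunc F, l ≠ 0 ∧
            (γ.map (algebraMap (Polynomial F) (RatFunc F))).mulVec v =
              l • ((h.map (algebraMap (Polynomial F) (RatFunc F))).mulVec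
                (![1, 0] : Fin 2 → RatFunc F))) := by
  set φ := algebraMap F[X] (RatFunc F)
  refine ⟨fun c d c' d' h h' hc _ hc' _ hh hh' => ⟨?_, ?_⟩, ?_⟩
  · rintro ⟨γ, hγ, l, -, hcusp⟩
    rw [mulVec_mulVec, ← Matrix.map_mul] at hcusp
    have hγX : γ ∈ Gamma1 F X := Gamma1_subset_of_dvd (dvd_pow_self X (by omega)) hγ
    exact hh.eq_and_exists_of_col_eq hn hc hc' hγ hh' <|
      col_eq_of_map_mulVec_eq_smul (RatFunc.algebraMap_injective F)
        (mul_mem_Gamma1 hγX (hh.mem_Gamma1_X hn)) (hh'.mem_Gamma1_X hn) hcusp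
  · rintro ⟨rfl, e, he⟩
    obtain ⟨γ, hγ, hcol⟩ := hh.exists_mem_Gamma1_col_eq hh' he
    refine ⟨γ, hγ, 1, one_ne_zero, ?_⟩
    rw [mulVec_mulVec, ← Matrix.map_mul, one_smul, map_mulVec_one_zero, map_mulVec_one_zero]
    simp only [hcol]
  · rintro v - ⟨δ, hδ, m, hm, hv⟩
    obtain ⟨h, hΓ, h01, hcol⟩ := exists_mem_Gamma1_col_eq_adjugate hδ n
    obtain ⟨c, d, hc, hd, hh⟩ := exists_isStdLift_of_mem_Gamma1 hΓ h01
    refine ⟨c, d, hc, hd, h, hh, 1, one_mem_Gamma1 _, m, hm, ?_⟩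
    rw [Matrix.map_one φ (map_zero φ) (map_one φ), one_mulVec,
      eq_smul_map_adjugate_mulVec φ hδ.1 hv, map_mulVec_one_zero, map_mulVec_one_zero]
    simp only [hcol]

set_option synthInstance.maxHeartbeats 1000000 in
theorem stmt6 (p : ℕ) (hp : p.Prime) (F : Type*) [Field F] [Fintype F] [CharP F p]
    (n : ℕ) (hn : 1 ≤ n) :
    (∀ c d c' d' : Polynomial F, ∀ h h' : Matrix (Fin 2) (Fin 2) (Polynomial F),
      c.degree < ((n - 1 : ℕ) : WithBot ℕ) → d.degree < ((n - 1 : ℕ) : WithBot ℕ) →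
      c'.degree < ((n - 1 : ℕ) : WithBot ℕ) → d'.degree < ((n - 1 : ℕ) : WithBot ℕ) →
      IsStdLift F n c d h → IsStdLift F n c' d' h' →
      ((∃ γ ∈ Gamma1 F ((X : Polynomial F) ^ n), ∃ l : RatFunc F, l ≠ 0 ∧
          (γ.map (algebraMap (Polynomial F) (RatFunc F))).mulVec
            ((h.map (algebraMap (Polynomial F) (RatFunc F))).mulVec
              (![1, 0] : Fin 2 → RatFunc F)) =
          l • ((h'.map (algebraMap (Polynomial F) (RatFunc F))).mulVec
              (![1, 0] : Fin 2 → RatFunc F))) ↔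
        (c = c' ∧ ∃ e : Polynomial F, (X : Polynomial F) ^ (n - 1) ∣ (d' - d - c * e)))) ∧
    (∀ v : Fin 2 → RatFunc F, v ≠ 0 →
      (∃ δ ∈ Gamma1 F (X : Polynomial F), ∃ m : RatFunc F, m ≠ 0 ∧
        (δ.map (algebraMap (Polynomial F) (RatFunc F))).mulVec v = ![m, 0]) →
      ∃ c d : Polynomial F, c.degree < ((n - 1 : ℕ) : WithBot ℕ) ∧
        d.degree < ((n - 1 : ℕ) : WithBot ℕ) ∧
        ∃ h : Matrix (Fin 2) (Fin 2) (Polynomial F), IsStdLift F n c d h ∧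
          ∃ γ ∈ Gamma1 F ((X : Polynomial F) ^ n), ∃ l : RatFunc F, l ≠ 0 ∧
            (γ.map (algebraMap (Polynomial F) (RatFunc F))).mulVec v =
              l • ((h.map (algebraMap (Polynomial F) (RatFunc F))).mulVec
                (![1, 0] : Fin 2 → RatFunc F))) :=
  stmt6_general F n hn
end
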